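/- Let n ≥ 1, let F : ℝ^{4n} → ℝ and φ : ℝ → ℝ be smooth, and set f = φ ∘ F. Then for every x ∈ ℝ^{4n}: P_f(x)(∇f(x)) = φ'(F(x))²·P_F(x)(∇F(x)) + φ'(F(x))·φ'''(F(x))·|∇F(x)|⁴ + 2φ'(F(x))·φ''(F(x))·D²F(x)[∇F(x), ∇F(x)] + φ'(F(x))·φ''(F(x))·|∇F(x)|²·ΔF(x). -/

import Mathlib

open scoped RealInnerProductSpace

noncomputable section

/-- `ℝ^{4n}` identified with `ℍⁿ`: the `4n` real coordinates are indexed by pairs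
`(a, t)` where `a` numbers the quaternionic component and `t ∈ {0,1,2,3}` the
real coordinates `1, i, j, k` of that quaternion. -/
abbrev Qn (n : ℕ) := EuclideanSpace ℝ (Fin n × Fin 4)

/-- The three almost complex structures `I₁, I₂, I₃` on `ℝ^{4n} = ℍⁿ`, given by
componentwise left multiplication by the quaternion units `i, j, k`. -/
def Iop (n : ℕ) (s : Fin 3) (x : Qn n) : Qn n := WithLp.toLp 2 (fun p : Fin n × Fin 4 =>
  ![ ![ -x (p.1, 1),  x (p.1, 0), -x (p.1, 3),  x (p.1, 2) ],
     ![ -x (p.1, 2),  x (p.1, 3),  x (p.1, 0), -x (p.1, 1) ],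
     ![ -x (p.1, 3), -x (p.1, 2),  x (p.1, 1),  x (p.1, 0) ] ] s p.2)

/-- The standard orthonormal basis of `ℝ^{4n}`. -/
def eQ (n : ℕ) (p : Fin n × Fin 4) : Qn n := EuclideanSpace.single p 1

/-- Second Fréchet derivative as a bilinear form. -/
def D2Q (n : ℕ) (g : Qn n → ℝ) (x X Y : Qn n) : ℝ := iteratedFDeriv ℝ 2 g x ![X, Y]

/-- Third Fréchet derivative as a trilinear form. -/
def D3Q (n : ℕ) (g : Qn n → ℝ) (x Z X Y : Qn n) : ℝ := iteratedFDeriv ℝ 3 g x ![Z, X, Y]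

/-- The Laplacian `Δg(x) = Σ_a D²g(x)[e_a, e_a]`. -/
def lapQ (n : ℕ) (g : Qn n → ℝ) (x : Qn n) : ℝ := ∑ p, D2Q n g x (eQ n p) (eQ n p)

/-- The flat quaternionic P-form
`P_g(x)(Z) = Σ_b D³g(x)[Z,e_b,e_b] + Σ_{s=1}^3 Σ_b D³g(x)[I_s Z, e_b, I_s e_b]`. -/
def PQ (n : ℕ) (g : Qn n → ℝ) (x Z : Qn n) : ℝ :=
  (∑ b, D3Q n g x Z (eQ n b) (eQ n b)) +
    ∑ s : Fin 3, ∑ b, D3Q n g x (Iop n s Z) (eQ n b) (Iop n s (eQ n b))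

/-! Differentiating `φ ∘ F` three times gives
`D³(φ∘F)[Z,X,Y] = φ'''·DF Z·DF X·DF Y + φ'·D³F[Z,X,Y]`
`  + φ''·(D²F[Z,X]·DF Y + DF X·D²F[Z,Y] + DF Z·D²F[X,Y])`,
and `∇(φ∘F) = φ'·∇F`. Contracting with `Z = ∇F` over an orthonormal basis produces the `φ'''` and
`φ''` terms of the formula. In the twisted sums `Z = I_s ∇F`, and since `I_s` is skew-adjoint,
`DF(I_s ∇F) = ⟪∇F, I_s ∇F⟫ = 0` kills the `φ'''` term, and the two surviving `φ''` terms are both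
`D²F[I_s ∇F, I_s ∇F]`, with opposite signs. -/

open scoped ContDiff

section DirectionalDerivative

variable {E : Type*} [NormedAddCommGroup E] [NormedSpace ℝ E]

/-- Directional derivatives as functions, so that the chain and product rules become identities
in the ring `E → ℝ`. -/
def dirDeriv (g : E → ℝ) (v : E) : E → ℝ := fun y => fderiv ℝ g y v

theorem ContDiff.dirDeriv {g : E → ℝ} (hg : ContDiff ℝ ∞ g) (v : E) :
    ContDiff ℝ ∞ (dirDeriv g v) :=
  (hg.fderiv_right le_rfl).clm_apply contDiff_const

variable {a b G : E → ℝ} {ψ : ℝ → ℝ} {v : E}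

theorem dirDeriv_add (ha : Differentiable ℝ a) (hb : Differentiable ℝ b) :
    dirDeriv (a + b) v = dirDeriv a v + dirDeriv b v := by
  ext y
  simp [dirDeriv, fderiv_add (ha y) (hb y)]

theorem dirDeriv_mul (ha : Differentiable ℝ a) (hb : Differentiable ℝ b) :
    dirDeriv (a * b) v = a * dirDeriv b v + b * dirDeriv a v := by
  ext y
  simp [dirDeriv, fderiv_mul (ha y) (hb y)]

theorem dirDeriv_comp (hψ : Differentiable ℝ ψ) (hG : Differentiable ℝ G) :
    dirDeriv (ψ ∘ G) v = (deriv ψ ∘ G) * dirDeriv G v := by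
  ext y
  simp [dirDeriv, ((hψ (G y)).hasDerivAt.comp_hasFDerivAt y (hG y).hasFDerivAt).fderiv]

theorem iteratedFDeriv_two_apply_eq_dirDeriv {g : E → ℝ} {x : E}
    (hg : DifferentiableAt ℝ (fderiv ℝ g) x) (X Y : E) :
    iteratedFDeriv ℝ 2 g x ![X, Y] = dirDeriv (dirDeriv g Y) X x := by
  change _ = fderiv ℝ (fun y => fderiv ℝ g y Y) x X
  simp [iteratedFDeriv_two_apply, fderiv_clm_apply hg (differentiableAt_const Y)]

theorem iteratedFDeriv_three_apply_eq_dirDeriv {g : E → ℝ} (hg : ContDiff ℝ 3 g)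
    (x Z X Y : E) :
    iteratedFDeriv ℝ 3 g x ![Z, X, Y] = dirDeriv (dirDeriv (dirDeriv g Y) X) Z x := by
  have hg' : Differentiable ℝ (fderiv ℝ g) :=
    (hg.fderiv_right (m := 2) le_rfl).differentiable (by norm_num)
  rw [(hg.differentiable_iteratedFDeriv (m := 2) (by norm_num) x).iteratedFDeriv_succ_apply_left']
  have h2 : (fun y => iteratedFDeriv ℝ 2 g y (Fin.tail ![Z, X, Y])) =
      dirDeriv (dirDeriv g Y) X := by
    ext y
    exact iteratedFDeriv_two_apply_eq_dirDeriv (hg' y) X Y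
  rw [h2]
  rfl

theorem iteratedFDeriv_three_smul_left (g : E → ℝ) (x : E) (c : ℝ) (Z X Y : E) :
    iteratedFDeriv ℝ 3 g x ![c • Z, X, Y] = c * iteratedFDeriv ℝ 3 g x ![Z, X, Y] := by
  simp [iteratedFDeriv_succ_apply_left]

theorem dirDeriv_dirDeriv_comp (hψ : ContDiff ℝ ∞ ψ) (hG : ContDiff ℝ ∞ G) (X Y : E) :
    dirDeriv (dirDeriv (ψ ∘ G) Y) X =
      (deriv (deriv ψ) ∘ G) * dirDeriv G X * dirDeriv G Y
        + (deriv ψ ∘ G) * dirDeriv (dirDeriv G Y) X := by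
  have dψ := hψ.differentiable (by simp)
  have dψ' := (contDiff_infty_iff_deriv.mp hψ).2.differentiable (by simp)
  have dG := hG.differentiable (by simp)
  have dGY := (hG.dirDeriv Y).differentiable (by simp)
  rw [dirDeriv_comp dψ dG, dirDeriv_mul (by fun_prop) dGY, dirDeriv_comp dψ' dG]
  ring

theorem dirDeriv_dirDeriv_dirDeriv_comp (hψ : ContDiff ℝ ∞ ψ) (hG : ContDiff ℝ ∞ G) (Z X Y : E) :
    dirDeriv (dirDeriv (dirDeriv (ψ ∘ G) Y) X) Z =
      (deriv (deriv (deriv ψ)) ∘ G) * dirDeriv G Z * dirDeriv G X * dirDeriv G Y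
        + (deriv (deriv ψ) ∘ G) * (dirDeriv (dirDeriv G X) Z * dirDeriv G Y
          + dirDeriv G X * dirDeriv (dirDeriv G Y) Z + dirDeriv G Z * dirDeriv (dirDeriv G Y) X)
        + (deriv ψ ∘ G) * dirDeriv (dirDeriv (dirDeriv G Y) X) Z := by
  have hψ' := (contDiff_infty_iff_deriv.mp hψ).2
  have dψ' := hψ'.differentiable (by simp)
  have dψ'' := (contDiff_infty_iff_deriv.mp hψ').2.differentiable (by simp)
  have dG := hG.differentiable (by simp)
  have dGX := (hG.dirDeriv X).differentiable (by simp)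
  have dGY := (hG.dirDeriv Y).differentiable (by simp)
  have dGYX := ((hG.dirDeriv Y).dirDeriv X).differentiable (by simp)
  rw [dirDeriv_dirDeriv_comp hψ hG, dirDeriv_add (by fun_prop) (by fun_prop),
    dirDeriv_mul (by fun_prop) dGY, dirDeriv_mul (dψ''.comp dG) dGX, dirDeriv_comp dψ'' dG,
    dirDeriv_mul (dψ'.comp dG) dGYX, dirDeriv_comp dψ' dG]
  ring

theorem iteratedFDeriv_three_comp_apply (hψ : ContDiff ℝ ∞ ψ) (hG : ContDiff ℝ ∞ G)
    (x Z X Y : E) :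
    iteratedFDeriv ℝ 3 (ψ ∘ G) x ![Z, X, Y] =
      deriv^[3] ψ (G x) * (fderiv ℝ G x Z * fderiv ℝ G x X * fderiv ℝ G x Y)
      + deriv^[2] ψ (G x) * (iteratedFDeriv ℝ 2 G x ![Z, X] * fderiv ℝ G x Y
          + fderiv ℝ G x X * iteratedFDeriv ℝ 2 G x ![Z, Y]
          + fderiv ℝ G x Z * iteratedFDeriv ℝ 2 G x ![X, Y])
      + deriv ψ (G x) * iteratedFDeriv ℝ 3 G x ![Z, X, Y] := by
  have h3 : (3 : WithTop ℕ∞) ≤ ∞ := WithTop.coe_le_coe.2 le_top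
  have hG2 := (hG.fderiv_right (m := ∞) (by simp)).differentiable (by simp)
  simp only [iteratedFDeriv_three_apply_eq_dirDeriv ((hψ.comp hG).of_le h3),
    iteratedFDeriv_three_apply_eq_dirDeriv (hG.of_le h3),
    iteratedFDeriv_two_apply_eq_dirDeriv (hG2 x),
    dirDeriv_dirDeriv_dirDeriv_comp hψ hG, Pi.add_apply, Pi.mul_apply, Function.comp_apply]
  simp only [dirDeriv]
  rw [show deriv^[3] ψ = deriv (deriv (deriv ψ)) from rfl,
    show deriv^[2] ψ = deriv (deriv ψ) from rfl]
  ring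

end DirectionalDerivative

section Gradient

variable {E : Type*} [NormedAddCommGroup E] [InnerProductSpace ℝ E]
  {ι : Type*} [Fintype ι]

theorem OrthonormalBasis.sum_inner_mul_apply (b : OrthonormalBasis ι ℝ E) (v : E)
    (L : E →ₗ[ℝ] ℝ) : ∑ i, ⟪v, b i⟫ * L (b i) = L v := by
  conv_rhs => rw [← b.sum_repr' v]
  simp [real_inner_comm]

theorem OrthonormalBasis.sum_inner_mul_iteratedFDeriv_two (b : OrthonormalBasis ι ℝ E)
    (g : E → ℝ) (x u v : E) :
    ∑ i, ⟪v, b i⟫ * iteratedFDeriv ℝ 2 g x ![u, b i] = iteratedFDeriv ℝ 2 g x ![u, v] := by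
  simpa [iteratedFDeriv_two_apply] using
    b.sum_inner_mul_apply v (fderiv ℝ (fderiv ℝ g) x u).toLinearMap

variable [CompleteSpace E] {φ : ℝ → ℝ} {F : E → ℝ}

theorem gradient_comp {x : E} (hφ : DifferentiableAt ℝ φ (F x)) (hF : DifferentiableAt ℝ F x) :
    gradient (φ ∘ F) x = deriv φ (F x) • gradient F x := by
  refine ext_inner_right ℝ fun v => ?_
  rw [inner_gradient_left, real_inner_smul_left, inner_gradient_left,
    (hφ.hasDerivAt.comp_hasFDerivAt x hF.hasFDerivAt).fderiv]
  simp

theorem sum_iteratedFDeriv_three_comp_gradient (b : OrthonormalBasis ι ℝ E)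
    (hφ : ContDiff ℝ ∞ φ) (hF : ContDiff ℝ ∞ F) (x : E) :
    ∑ i, iteratedFDeriv ℝ 3 (φ ∘ F) x ![gradient F x, b i, b i] =
      deriv^[3] φ (F x) * ‖gradient F x‖ ^ 4
      + 2 * deriv^[2] φ (F x) * iteratedFDeriv ℝ 2 F x ![gradient F x, gradient F x]
      + deriv^[2] φ (F x) * ‖gradient F x‖ ^ 2 * ∑ i, iteratedFDeriv ℝ 2 F x ![b i, b i]
      + deriv φ (F x) * ∑ i, iteratedFDeriv ℝ 3 F x ![gradient F x, b i, b i] := by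
  set g := gradient F x
  have hnorm : ∑ i, ⟪g, b i⟫ * ⟪g, b i⟫ = ‖g‖ ^ 2 := by
    simpa [real_inner_self_eq_norm_sq] using b.sum_inner_mul_apply g (innerₛₗ ℝ g)
  calc _ = ∑ i, (deriv^[3] φ (F x) * ‖g‖ ^ 2 * (⟪g, b i⟫ * ⟪g, b i⟫)
          + 2 * deriv^[2] φ (F x) * (⟪g, b i⟫ * iteratedFDeriv ℝ 2 F x ![g, b i])
          + deriv^[2] φ (F x) * ‖g‖ ^ 2 * iteratedFDeriv ℝ 2 F x ![b i, b i]
          + deriv φ (F x) * iteratedFDeriv ℝ 3 F x ![g, b i, b i]) := by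
        refine Finset.sum_congr rfl fun i _ => ?_
        simp only [iteratedFDeriv_three_comp_apply hφ hF, ← inner_gradient_left,
          real_inner_self_eq_norm_sq, g]
        ring
    _ = _ := by
        simp only [Finset.sum_add_distrib, ← Finset.mul_sum, hnorm,
          b.sum_inner_mul_iteratedFDeriv_two]
        ring

theorem sum_iteratedFDeriv_three_comp_gradient_skew (b : OrthonormalBasis ι ℝ E)
    (A : E →ₗ[ℝ] E) (hA : ∀ u v, ⟪A u, v⟫ = -⟪u, A v⟫)
    (hφ : ContDiff ℝ ∞ φ) (hF : ContDiff ℝ ∞ F) (x : E) :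
    ∑ i, iteratedFDeriv ℝ 3 (φ ∘ F) x ![A (gradient F x), b i, A (b i)] =
      deriv φ (F x) * ∑ i, iteratedFDeriv ℝ 3 F x ![A (gradient F x), b i, A (b i)] := by
  set g := gradient F x
  have hg : ⟪g, A g⟫ = 0 := by
    have := hA g g
    rw [real_inner_comm] at this
    linarith
  have hAb : ∀ i, ⟪g, A (b i)⟫ = -⟪A g, b i⟫ := fun i => by rw [hA]; ring
  have htwist : ∑ i, ⟪g, b i⟫ * iteratedFDeriv ℝ 2 F x ![A g, A (b i)] =
      iteratedFDeriv ℝ 2 F x ![A g, A g] := by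
    simpa [iteratedFDeriv_two_apply] using
      b.sum_inner_mul_apply g ((fderiv ℝ (fderiv ℝ F) x (A g)).toLinearMap ∘ₗ A)
  calc _ = ∑ i, (deriv^[2] φ (F x) * (⟪g, b i⟫ * iteratedFDeriv ℝ 2 F x ![A g, A (b i)]
          - ⟪A g, b i⟫ * iteratedFDeriv ℝ 2 F x ![A g, b i])
          + deriv φ (F x) * iteratedFDeriv ℝ 3 F x ![A g, b i, A (b i)]) := by
        refine Finset.sum_congr rfl fun i _ => ?_
        simp only [iteratedFDeriv_three_comp_apply hφ hF, ← inner_gradient_left, hg, hAb, g]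
        ring
    _ = _ := by
        simp only [Finset.sum_add_distrib, ← Finset.mul_sum, Finset.sum_sub_distrib, htwist,
          b.sum_inner_mul_iteratedFDeriv_two]
        ring

end Gradient

def IopLinear (n : ℕ) (s : Fin 3) : Qn n →ₗ[ℝ] Qn n where
  toFun := Iop n s
  map_add' v w := by
    ext ⟨a, t⟩
    fin_cases s <;> fin_cases t <;> simp [Iop] <;> ring
  map_smul' c v := by
    ext ⟨a, t⟩
    fin_cases s <;> fin_cases t <;> simp [Iop]

theorem coe_IopLinear (n : ℕ) (s : Fin 3) : ⇑(IopLinear n s) = Iop n s := rfl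

theorem inner_Iop_left (n : ℕ) (s : Fin 3) (v w : Qn n) :
    ⟪Iop n s v, w⟫ = -⟪v, Iop n s w⟫ := by
  simp only [PiLp.inner_apply, RCLike.inner_apply, conj_trivial, Fintype.sum_prod_type,
    ← Finset.sum_neg_distrib, Fin.sum_univ_four]
  refine Finset.sum_congr rfl fun a _ => ?_
  fin_cases s <;> simp [Iop] <;> ring

theorem eQ_eq_basisFun (n : ℕ) : eQ n = EuclideanSpace.basisFun (Fin n × Fin 4) ℝ := by
  ext1 p
  rw [EuclideanSpace.basisFun_apply, eQ]

theorem qc_P_function_chain_rule_general (n : ℕ) (F : Qn n → ℝ) (φ : ℝ → ℝ)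
    (hF : ContDiff ℝ (⊤ : ℕ∞) F) (hφ : ContDiff ℝ (⊤ : ℕ∞) φ)
    (f : Qn n → ℝ) (hf : f = φ ∘ F) (x : Qn n) :
    PQ n f x (gradient f x) =
      deriv φ (F x) ^ 2 * PQ n F x (gradient F x)
      + deriv φ (F x) * deriv^[3] φ (F x) * ‖gradient F x‖ ^ 4
      + 2 * deriv φ (F x) * deriv^[2] φ (F x) *
          D2Q n F x (gradient F x) (gradient F x)
      + deriv φ (F x) * deriv^[2] φ (F x) * ‖gradient F x‖ ^ 2 * lapQ n F x := by
  subst hf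
  have hgrad : gradient (φ ∘ F) x = deriv φ (F x) • gradient F x :=
    gradient_comp (hφ.differentiable (by simp) _) (hF.differentiable (by simp) _)
  simp only [PQ, D3Q, D2Q, lapQ, hgrad, eQ_eq_basisFun, ← coe_IopLinear, map_smul,
    iteratedFDeriv_three_smul_left, ← Finset.mul_sum,
    sum_iteratedFDeriv_three_comp_gradient _ hφ hF,
    sum_iteratedFDeriv_three_comp_gradient_skew _ (IopLinear n _) (inner_Iop_left n _) hφ hF]
  ring

/-- the P-function after a change of the dependent variable, `f = φ ∘ F`. -/
theorem qc_P_function_chain_rule (n : ℕ) (hn : 1 ≤ n) (F : Qn n → ℝ) (φ : ℝ → ℝ)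
    (hF : ContDiff ℝ (⊤ : ℕ∞) F) (hφ : ContDiff ℝ (⊤ : ℕ∞) φ)
    (f : Qn n → ℝ) (hf : f = φ ∘ F) (x : Qn n) :
    PQ n f x (gradient f x) =
      deriv φ (F x) ^ 2 * PQ n F x (gradient F x)
      + deriv φ (F x) * deriv^[3] φ (F x) * ‖gradient F x‖ ^ 4
      + 2 * deriv φ (F x) * deriv^[2] φ (F x) *
          D2Q n F x (gradient F x) (gradient F x)
      + deriv φ (F x) * deriv^[2] φ (F x) * ‖gradient F x‖ ^ 2 * lapQ n F x :=
  qc_P_function_chain_rule_general n F φ hF hφ f hf x
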